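/- Let n ≥ 1 and let D : ℝ → M_n(ℂ) be a continuously differentiable path of Hermitian matrices which is a loop on [0,1], i.e. D(0) = D(1). Then for every continuous function g : ℝ → ℝ, ∫₀¹ tr(D′(t)·g(D(t))) dt = 0. (This is the finite-dimensional instance of the paper's Theorem stating that the one form V ↦ τ(V g(D)) is exact: the integral of the spectral-flow one-form around any loop vanishes.) -/

import Mathlib

/-!
For a polynomial `p` the integrand `tr (D' p(D))` is an exact derivative: by cyclicity of the
trace, `(tr (D ^ (k + 1)))' = (k + 1) tr (D' D ^ k)`, so its integral over a loop vanishes.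
A continuous `g` is a uniform limit of polynomials on an interval containing the eigenvalues of
all `D t`, `t ∈ [0, 1]`. Writing `tr (B f(A)) = ∑ᵢ (U* B U)ᵢᵢ f(λᵢ)` with `U` unitary shows that
the integrands then converge uniformly on `[0, 1]`, hence so do the integrals.
-/

attribute [local instance] Matrix.normedAddCommGroup Matrix.normedSpace

open Matrix Filter Topology Set

namespace Matrix

variable {𝕜 : Type*} [RCLike 𝕜] {l m n : Type*} [Fintype l] [Fintype m] [Fintype n]

theorem norm_mul_le_card_mul (A : Matrix l m 𝕜) (B : Matrix m n 𝕜) :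
    ‖A * B‖ ≤ Fintype.card m * (‖A‖ * ‖B‖) := by
  refine (norm_le_iff (by positivity)).2 fun i j => ?_
  calc ‖(A * B) i j‖ ≤ ∑ k, ‖A i k‖ * ‖B k j‖ := by
        simpa only [mul_apply, norm_mul] using norm_sum_le _ fun k => A i k * B k j
    _ ≤ ∑ _k : m, ‖A‖ * ‖B‖ := by
        gcongr; exacts [norm_entry_le_entrywise_sup_norm A, norm_entry_le_entrywise_sup_norm B]
    _ = Fintype.card m * (‖A‖ * ‖B‖) := by simp

theorem norm_trace_le (A : Matrix m m 𝕜) : ‖A.trace‖ ≤ Fintype.card m * ‖A‖ := by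
  calc ‖A.trace‖ ≤ ∑ i, ‖A i i‖ := norm_sum_le _ _
    _ ≤ ∑ _i : m, ‖A‖ := by gcongr; exact norm_entry_le_entrywise_sup_norm A
    _ = Fintype.card m * ‖A‖ := by simp

variable [DecidableEq m]

theorem norm_conjStarAlgAut_le (U : unitaryGroup m 𝕜) (A : Matrix m m 𝕜) :
    ‖Unitary.conjStarAlgAut 𝕜 _ U A‖ ≤ Fintype.card m ^ 2 * ‖A‖ := by
  obtain ⟨U, hU⟩ := U
  have hU₁ : ‖U‖ ≤ 1 := entrywise_sup_norm_bound_of_unitary hU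
  have hU₁' : ‖star U‖ ≤ 1 := entrywise_sup_norm_bound_of_unitary (Unitary.star_mem hU)
  calc ‖U * A * star U‖ ≤ Fintype.card m * (Fintype.card m * (‖U‖ * ‖A‖) * ‖star U‖) := by
        grw [norm_mul_le_card_mul, norm_mul_le_card_mul]
    _ ≤ Fintype.card m * (Fintype.card m * (1 * ‖A‖) * 1) := by gcongr
    _ = Fintype.card m ^ 2 * ‖A‖ := by ring

namespace IsHermitian

variable {A : Matrix m m 𝕜} (hA : A.IsHermitian)
include hA

theorem abs_eigenvalues_le (i : m) : |hA.eigenvalues i| ≤ Fintype.card m ^ 2 * ‖A‖ :=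
  calc |hA.eigenvalues i| = ‖diagonal (RCLike.ofReal ∘ hA.eigenvalues : m → 𝕜) i i‖ := by simp
    _ ≤ ‖diagonal (RCLike.ofReal ∘ hA.eigenvalues : m → 𝕜)‖ :=
        norm_entry_le_entrywise_sup_norm _
    _ ≤ Fintype.card m ^ 2 * ‖A‖ :=
        hA.conjStarAlgAut_star_eigenvectorUnitary ▸ norm_conjStarAlgAut_le _ A

theorem trace_mul_cfc (B : Matrix m m 𝕜) (f : ℝ → ℝ) :
    (B * cfc f A).trace = ∑ i,
      Unitary.conjStarAlgAut 𝕜 _ (star hA.eigenvectorUnitary) B i i * f (hA.eigenvalues i) := by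
  rw [hA.cfc_eq, IsHermitian.cfc, Unitary.conjStarAlgAut_apply, Unitary.conjStarAlgAut_star_apply,
    ← mul_assoc, ← mul_assoc, trace_mul_cycle, ← mul_assoc, trace]
  simp [mul_diagonal]

theorem norm_trace_mul_cfc_sub_le (B : Matrix m m 𝕜) {f g : ℝ → ℝ} {ε : ℝ}
    (hfg : ∀ i, |f (hA.eigenvalues i) - g (hA.eigenvalues i)| ≤ ε) :
    ‖(B * cfc f A).trace - (B * cfc g A).trace‖ ≤ Fintype.card m ^ 3 * ‖B‖ * ε := by
  set C := Unitary.conjStarAlgAut 𝕜 _ (star hA.eigenvectorUnitary) B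
  have hC : ‖C‖ ≤ Fintype.card m ^ 2 * ‖B‖ := norm_conjStarAlgAut_le _ B
  rw [hA.trace_mul_cfc, hA.trace_mul_cfc, ← Finset.sum_sub_distrib]
  calc ‖∑ i, (C i i * f (hA.eigenvalues i) - C i i * g (hA.eigenvalues i))‖
      ≤ ∑ i, ‖C i i‖ * |f (hA.eigenvalues i) - g (hA.eigenvalues i)| := by
        simpa only [← mul_sub, ← RCLike.ofReal_sub, norm_mul, RCLike.norm_ofReal]
          using norm_sum_le _ fun i => C i i * (f (hA.eigenvalues i) - g (hA.eigenvalues i) : 𝕜)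
    _ ≤ ∑ _i : m, Fintype.card m ^ 2 * ‖B‖ * ε := by
        gcongr with i
        · exact (norm_entry_le_entrywise_sup_norm C).trans hC
        · exact hfg i
    _ = Fintype.card m ^ 3 * ‖B‖ * ε := by simp; ring

end IsHermitian

theorem exists_eigenvalues_mem_Icc_of_continuousOn {X : Type*} [TopologicalSpace X] {s : Set X}
    (hs : IsCompact s) {A : X → Matrix m m 𝕜} (hA : ∀ x, (A x).IsHermitian)
    (hcont : ContinuousOn A s) : ∃ R, ∀ x ∈ s, ∀ i, (hA x).eigenvalues i ∈ Icc (-R) R := by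
  obtain ⟨C, hC⟩ := hs.exists_bound_of_continuousOn hcont
  exact ⟨Fintype.card m ^ 2 * C, fun x hx i =>
    abs_le.1 <| ((hA x).abs_eigenvalues_le i).trans (by gcongr; exact hC x hx)⟩

theorem tendstoUniformlyOn_trace_mul_cfc {X ι : Type*} {l : Filter ι} {F : ι → ℝ → ℝ}
    {f : ℝ → ℝ} {K : Set ℝ} (hF : TendstoUniformlyOn F f l K) {s : Set X}
    {A B : X → Matrix m m 𝕜} (hA : ∀ x, (A x).IsHermitian)
    (hAK : ∀ x ∈ s, ∀ i, (hA x).eigenvalues i ∈ K) {C : ℝ} (hBC : ∀ x ∈ s, ‖B x‖ ≤ C) :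
    TendstoUniformlyOn (fun k x => (B x * cfc (F k) (A x)).trace)
      (fun x => (B x * cfc f (A x)).trace) l s := by
  rw [Metric.tendstoUniformlyOn_iff] at hF ⊢
  intro ε hε
  obtain ⟨M, hM, hBM⟩ : ∃ M : ℝ, 0 < M ∧ ∀ x ∈ s, Fintype.card m ^ 3 * ‖B x‖ ≤ M :=
    ⟨Fintype.card m ^ 3 * |C| + 1, by positivity, fun x hx => by
      grw [hBC x hx, ← le_abs_self C]; linarith⟩
  filter_upwards [hF (ε / (2 * M)) (by positivity)] with k hk x hx
  rw [dist_eq_norm]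
  calc _ ≤ Fintype.card m ^ 3 * ‖B x‖ * (ε / (2 * M)) :=
        (hA x).norm_trace_mul_cfc_sub_le _ fun i => by
          simpa [Real.dist_eq] using (hk _ (hAK x hx i)).le
    _ ≤ M * (ε / (2 * M)) := by gcongr; exact hBM x hx
    _ < ε := by field_simp; linarith

end Matrix

theorem Polynomial.exists_tendstoUniformlyOn_eval {a b : ℝ} {f : ℝ → ℝ}
    (hf : ContinuousOn f (Icc a b)) :
    ∃ p : ℕ → Polynomial ℝ, TendstoUniformlyOn (fun k x => (p k).eval x) f atTop (Icc a b) := by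
  choose p hp using fun k : ℕ =>
    exists_polynomial_near_of_continuousOn a b f hf (1 / (k + 1)) Nat.one_div_pos_of_nat
  refine ⟨p, Metric.tendstoUniformlyOn_iff.2 fun ε hε => ?_⟩
  obtain ⟨N, hN⟩ := exists_nat_one_div_lt hε
  filter_upwards [eventually_ge_atTop N] with k hk x hx
  rw [Real.dist_eq, abs_sub_comm]
  calc _ < 1 / (k + 1 : ℝ) := hp k x hx
    _ ≤ 1 / (N + 1) := by gcongr
    _ < ε := hN

section Calculus

variable {𝕜 : Type*} [RCLike 𝕜] {l m n : Type*} [Fintype l] [Fintype m] [Fintype n]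
  {t : ℝ}

-- The entrywise sup norm is not submultiplicative, so `HasDerivAt.mul` does not apply; matrix
-- multiplication is still a bounded bilinear map, with constant `card m`.
theorem HasDerivAt.matrix_mul {A : ℝ → Matrix l m 𝕜} {B : ℝ → Matrix m n 𝕜}
    {A' : Matrix l m 𝕜} {B' : Matrix m n 𝕜} (hA : HasDerivAt A A' t) (hB : HasDerivAt B B' t) :
    HasDerivAt (fun s => A s * B s) (A' * B t + A t * B') t := by
  let mulCLM : Matrix l m 𝕜 →L[ℝ] Matrix m n 𝕜 →L[ℝ] Matrix l n 𝕜 :=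
    (LinearMap.mk₂ ℝ (fun (A : Matrix l m 𝕜) (B : Matrix m n 𝕜) => A * B)
      Matrix.add_mul Matrix.smul_mul Matrix.mul_add fun c A B => Matrix.mul_smul A c B)
      |>.mkContinuous₂ (Fintype.card m) fun A B => by rw [mul_assoc]; exact norm_mul_le_card_mul A B
  have h := mulCLM.hasDerivAt_of_bilinear (fun _ => hA) (fun _ => hB)
  simp only [mulCLM, LinearMap.mkContinuous₂_apply, LinearMap.mk₂_apply] at h
  rwa [add_comm] at h

theorem HasDerivAt.matrix_trace {A : ℝ → Matrix m m 𝕜} {A' : Matrix m m 𝕜}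
    (hA : HasDerivAt A A' t) : HasDerivAt (fun s => (A s).trace) A'.trace t := by
  let traceCLM : Matrix m m 𝕜 →L[ℝ] 𝕜 :=
    ((traceLinearMap m 𝕜 𝕜).restrictScalars ℝ).mkContinuous (Fintype.card m)
      fun A => norm_trace_le A
  exact traceCLM.hasFDerivAt.comp_hasDerivAt t hA

variable [DecidableEq m]

theorem HasDerivAt.matrix_pow {A : ℝ → Matrix m m 𝕜} {A' : Matrix m m 𝕜}
    (hA : HasDerivAt A A' t) (k : ℕ) :
    HasDerivAt (fun s => A s ^ (k + 1))
      (∑ i ∈ Finset.range (k + 1), A t ^ i * A' * A t ^ (k - i)) t := by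
  induction k with
  | zero => simpa using hA
  | succ k ih =>
    convert ih.matrix_mul hA using 1
    · simp only [pow_succ]
    · rw [Finset.sum_range_succ _ (k + 1), Finset.sum_mul]
      congr 1
      · refine Finset.sum_congr rfl fun i hi => ?_
        rw [Finset.mem_range] at hi
        rw [show k + 1 - i = k - i + 1 by omega, pow_succ, mul_assoc _ _ (A t)]
      · simp

theorem HasDerivAt.trace_matrix_pow {A : ℝ → Matrix m m 𝕜} {A' : Matrix m m 𝕜}
    (hA : HasDerivAt A A' t) (k : ℕ) :
    HasDerivAt (fun s => (A s ^ (k + 1)).trace) ((k + 1) * (A' * A t ^ k).trace) t := by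
  convert (hA.matrix_pow k).matrix_trace using 1
  have hcyclic : ∀ i ∈ Finset.range (k + 1),
      (A t ^ i * A' * A t ^ (k - i)).trace = (A' * A t ^ k).trace := fun i hi => by
    rw [trace_mul_cycle, ← pow_add, Nat.sub_add_cancel (Finset.mem_range_succ_iff.1 hi),
      trace_mul_comm]
  simp [trace_sum, Finset.sum_congr rfl hcyclic]

end Calculus

section LoopIntegral

variable {𝕜 : Type*} [RCLike 𝕜] {m : Type*} [Fintype m] [DecidableEq m] {a b : ℝ}
  {D D' : ℝ → Matrix m m 𝕜}

theorem integral_trace_mul_pow_eq_zero (hderiv : ∀ t, HasDerivAt D (D' t) t)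
    (hD' : Continuous D') (hloop : D a = D b) (k : ℕ) :
    ∫ t in a..b, (D' t * D t ^ k).trace = 0 := by
  have hD : Continuous D := continuous_iff_continuousAt.2 fun t => (hderiv t).continuousAt
  have hFTC := intervalIntegral.integral_eq_sub_of_hasDerivAt
    (fun t _ => (hderiv t).trace_matrix_pow k)
    ((continuous_const.mul (hD'.matrix_mul (hD.pow k)).matrix_trace).intervalIntegrable a b)
  rw [hloop, sub_self, intervalIntegral.integral_const_mul] at hFTC
  exact (mul_eq_zero.1 hFTC).resolve_left (Nat.cast_add_one_ne_zero k)

theorem integral_trace_mul_aeval_eq_zero (hderiv : ∀ t, HasDerivAt D (D' t) t)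
    (hD' : Continuous D') (hloop : D a = D b) (p : Polynomial ℝ) :
    ∫ t in a..b, (D' t * Polynomial.aeval (D t) p).trace = 0 := by
  have hD : Continuous D := continuous_iff_continuousAt.2 fun t => (hderiv t).continuousAt
  simp only [Polynomial.aeval_eq_sum_range, Finset.mul_sum, mul_smul_comm, trace_sum, trace_smul]
  rw [intervalIntegral.integral_finsetSum fun i _ => ?_]
  · simp [intervalIntegral.integral_smul, integral_trace_mul_pow_eq_zero hderiv hD' hloop]
  · exact ((hD'.matrix_mul (hD.pow i)).matrix_trace.const_smul _).intervalIntegrable a b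

end LoopIntegral

theorem integral_one_form_loop_vanishes_finite_dim_general
    (n : ℕ)
    (D : ℝ → Matrix (Fin n) (Fin n) ℂ)
    (hD : ∀ t, (D t).IsHermitian)
    (D' : ℝ → Matrix (Fin n) (Fin n) ℂ)
    (hderiv : ∀ t, HasDerivAt D (D' t) t)
    (hD'cont : Continuous D')
    (hloop : D 0 = D 1)
    (g : ℝ → ℝ) (hg : Continuous g) :
    (∫ t in (0:ℝ)..1, (D' t * cfc g (D t)).trace) = 0 := by
  have hDcont : Continuous D := continuous_iff_continuousAt.2 fun t => (hderiv t).continuousAt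
  obtain ⟨R, hR⟩ := exists_eigenvalues_mem_Icc_of_continuousOn isCompact_Icc hD
    (hDcont.continuousOn (s := Icc 0 1))
  obtain ⟨C, hC⟩ := isCompact_Icc.exists_bound_of_continuousOn (hD'cont.continuousOn (s := Icc 0 1))
  obtain ⟨p, hp⟩ := Polynomial.exists_tendstoUniformlyOn_eval (hg.continuousOn (s := Icc (-R) R))
  have hconv := tendstoUniformlyOn_trace_mul_cfc hp hD hR hC
  rw [← uIcc_of_le zero_le_one] at hconv
  have hpoly (k : ℕ) : (fun t => (D' t * cfc (fun x => (p k).eval x) (D t)).trace) =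
      fun t => (D' t * Polynomial.aeval (D t) (p k)).trace :=
    funext fun t => congrArg (fun M => (D' t * M).trace) (cfc_polynomial (p k) (D t) (hD t))
  have hlim := hconv.tendsto_intervalIntegral_of_continuousOn (μ := MeasureTheory.volume)
    (.of_forall fun k => hpoly k ▸
      (hD'cont.matrix_mul ((Polynomial.continuous_aeval _).comp hDcont)).matrix_trace.continuousOn)
  simp only [hpoly, integral_trace_mul_aeval_eq_zero hderiv hD'cont hloop] at hlim
  exact tendsto_nhds_unique hlim tendsto_const_nhds

theorem integral_one_form_loop_vanishes_finite_dim
    (n : ℕ) (hn : 1 ≤ n)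
    (D : ℝ → Matrix (Fin n) (Fin n) ℂ)
    (hD : ∀ t, (D t).IsHermitian)
    (D' : ℝ → Matrix (Fin n) (Fin n) ℂ)
    (hderiv : ∀ t, HasDerivAt D (D' t) t)
    (hD'cont : Continuous D')
    (hloop : D 0 = D 1)
    (g : ℝ → ℝ) (hg : Continuous g) :
    (∫ t in (0:ℝ)..1, (D' t * cfc g (D t)).trace) = 0 :=
  integral_one_form_loop_vanishes_finite_dim_general n D hD D' hderiv hD'cont hloop g hg
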